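/- Let P₁, P₂ be PCSP supports on X₁, X₂ with X = X₁ ∪ X₂. If there exists a rooted binary tree topology τ on X such that every PCSP of τ|X₁ belongs to P₁ and every PCSP of τ|X₂ belongs to P₂, then every PCSP of τ belongs to the mutual PCSP support M(P₁, P₂). -/

import Mathlib

open Finset

attribute [local instance] Classical.propDecidable

/-- A subsplit on taxa of type `α`: an unordered pair of finite subsets of taxa. -/
abbrev Subsplit (α : Type*) := Sym2 (Finset α)

/-- A parent-child subsplit pair (PCSP): a pair `(t, s)` of subsplits. -/
abbrev PCSPair (α : Type*) := Subsplit α × Subsplit α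

namespace Subsplit

variable {α : Type*} [DecidableEq α]

/-- The parent clade `U(s)` of a subsplit: the union of its two child clades. -/
def clade (s : Subsplit α) : Finset α :=
  Sym2.lift ⟨fun Y Z => Y ∪ Z, fun _ _ => Finset.union_comm _ _⟩ s

/-- A subsplit is valid when its two child clades are disjoint. -/
def Valid (s : Subsplit α) : Prop :=
  Sym2.lift ⟨fun Y Z => Disjoint Y Z, fun _ _ => propext disjoint_comm⟩ s

/-- A subsplit is nontrivial when both child clades are nonempty. -/
def Nontriv (s : Subsplit α) : Prop :=
  Sym2.lift ⟨fun Y Z => Y.Nonempty ∧ Z.Nonempty, fun _ _ => propext and_comm⟩ s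

/-- Restriction of a subsplit to a taxon subset `B`. -/
def restrict (s : Subsplit α) (B : Finset α) : Subsplit α := Sym2.map (fun Y => Y ∩ B) s

end Subsplit

section Defs

variable {α : Type*} [DecidableEq α]

/-- `τ` is a rooted binary tree topology on the clade `W`. -/
structure IsTopology (W : Finset α) (τ : Finset (Subsplit α)) : Prop where
  two_le : 2 ≤ W.card
  valid : ∀ s ∈ τ, Subsplit.Valid s
  nontriv : ∀ s ∈ τ, Subsplit.Nontriv s
  root : ∃! s, s ∈ τ ∧ Subsplit.clade s = W
  children : ∀ s ∈ τ, ∀ C ∈ s, 2 ≤ C.card → ∃! s', s' ∈ τ ∧ Subsplit.clade s' = C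
  parentEx : ∀ s ∈ τ, Subsplit.clade s = W ∨ ∃ t ∈ τ, Subsplit.clade s ∈ t

/-- Restriction of a topology (set of subsplits) to taxon subset `B`:
restrict every subsplit and keep the nontrivial results. -/
noncomputable def restrictT (τ : Finset (Subsplit α)) (B : Finset α) : Finset (Subsplit α) :=
  (τ.image (fun s => Subsplit.restrict s B)).filter (fun s => Subsplit.Nontriv s)

/-- A subsplit support on taxon set `X'`: a set of valid nontrivial subsplits on `X'`. -/
def IsSupport (X' : Finset α) (S : Set (Subsplit α)) : Prop :=
  ∀ s ∈ S, Subsplit.Valid s ∧ Subsplit.Nontriv s ∧ Subsplit.clade s ⊆ X'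

/-- `S(W)`: members of `S` dividing the clade `W`, together with the trivial subsplit `{W, ∅}`. -/
def supportAt (S : Set (Subsplit α)) (W : Finset α) : Set (Subsplit α) :=
  {s | s ∈ S ∧ Subsplit.clade s = W} ∪ {Sym2.mk W (∅ : Finset α)}

/-- The set `s₁ ⊠ s₂` of the two candidate combinations of two subsplits. -/
def boxTimes (s₁ s₂ : Subsplit α) : Set (Subsplit α) :=
  {s | ∃ Y₁ Z₁ Y₂ Z₂ : Finset α, s₁ = Sym2.mk Y₁ Z₁ ∧ s₂ = Sym2.mk Y₂ Z₂ ∧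
    (s = Sym2.mk (Y₁ ∪ Y₂) (Z₁ ∪ Z₂) ∨ s = Sym2.mk (Y₁ ∪ Z₂) (Z₁ ∪ Y₂))}

/-- Reachable clades in the mutual subsplit support construction. -/
inductive ReachClade (S₁ S₂ : Set (Subsplit α)) (X₁ X₂ : Finset α) : Finset α → Prop
  | root : ReachClade S₁ S₂ X₁ X₂ (X₁ ∪ X₂)
  | step {W : Finset α} {s₁ s₂ s : Subsplit α} {C : Finset α} :
      ReachClade S₁ S₂ X₁ X₂ W →
      s₁ ∈ supportAt S₁ (W ∩ X₁) → s₂ ∈ supportAt S₂ (W ∩ X₂) →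
      s ∈ boxTimes s₁ s₂ → Subsplit.Valid s → Subsplit.Nontriv s →
      C ∈ s → 2 ≤ C.card → ReachClade S₁ S₂ X₁ X₂ C

/-- The mutual subsplit support `M(S₁, S₂)`. -/
def mutualSupport (S₁ S₂ : Set (Subsplit α)) (X₁ X₂ : Finset α) : Set (Subsplit α) :=
  {s | ∃ W s₁ s₂, ReachClade S₁ S₂ X₁ X₂ W ∧
    s₁ ∈ supportAt S₁ (W ∩ X₁) ∧ s₂ ∈ supportAt S₂ (W ∩ X₂) ∧
    s ∈ boxTimes s₁ s₂ ∧ Subsplit.Valid s ∧ Subsplit.Nontriv s}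

/-- `(t, s)` is a PCSP on taxon set `X`: `s` is a valid nontrivial subsplit, and `t` is a
subsplit (or the root placeholder `⟨X, ∅⟩`) on `X` having `U(s)` as a child clade. -/
def IsPCSPOn (X : Finset α) (p : PCSPair α) : Prop :=
  Subsplit.Valid p.2 ∧ Subsplit.Nontriv p.2 ∧ Subsplit.Valid p.1 ∧
    Subsplit.clade p.2 ∈ p.1 ∧ Subsplit.clade p.1 ⊆ X ∧
    (Subsplit.Nontriv p.1 ∨ p.1 = Sym2.mk X (∅ : Finset α))

/-- A PCSP support on taxon set `X'`. -/
def IsPCSPSupport (X' : Finset α) (P : Set (PCSPair α)) : Prop :=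
  ∀ p ∈ P, IsPCSPOn X' p

/-- The subsplits of a PCSP support: subsplits occurring in some pair of `P`,
together with the root placeholder `⟨X', ∅⟩`. -/
def subsplitsOfP (X' : Finset α) (P : Set (PCSPair α)) : Set (Subsplit α) :=
  {u | (∃ s, (u, s) ∈ P) ∨ (∃ t, (t, u) ∈ P)} ∪ {Sym2.mk X' (∅ : Finset α)}

/-- `P(t/W)`: the subsplits `s` with `U(s) = W` and `(t → s) ∈ P`,
together with the trivial subsplit `{W, ∅}`. -/
def pcspSupportAt (P : Set (PCSPair α)) (t : Subsplit α) (W : Finset α) : Set (Subsplit α) :=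
  {s | Subsplit.clade s = W ∧ (t, s) ∈ P} ∪ {Sym2.mk W (∅ : Finset α)}

/-- Reachable states `(t/W, t₁/W₁, t₂/W₂)` in the mutual PCSP support construction. -/
inductive ReachState (P₁ P₂ : Set (PCSPair α)) (X₁ X₂ : Finset α) :
    Subsplit α → Finset α → Subsplit α → Finset α → Subsplit α → Finset α → Prop
  | root : ReachState P₁ P₂ X₁ X₂ (Sym2.mk (X₁ ∪ X₂) (∅ : Finset α)) (X₁ ∪ X₂)
      (Sym2.mk X₁ (∅ : Finset α)) X₁ (Sym2.mk X₂ (∅ : Finset α)) X₂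
  | step {t : Subsplit α} {W : Finset α} {t₁ : Subsplit α} {W₁ : Finset α}
      {t₂ : Subsplit α} {W₂ : Finset α} {s₁ s₂ s u₁ u₂ : Subsplit α} {C : Finset α} :
      ReachState P₁ P₂ X₁ X₂ t W t₁ W₁ t₂ W₂ →
      s₁ ∈ pcspSupportAt P₁ t₁ W₁ → s₂ ∈ pcspSupportAt P₂ t₂ W₂ →
      s ∈ boxTimes s₁ s₂ → Subsplit.Valid s → Subsplit.Nontriv s →
      ((Subsplit.Nontriv s₁ ∧ u₁ = s₁) ∨ (¬ Subsplit.Nontriv s₁ ∧ u₁ = t₁)) →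
      ((Subsplit.Nontriv s₂ ∧ u₂ = s₂) ∨ (¬ Subsplit.Nontriv s₂ ∧ u₂ = t₂)) →
      C ∈ s → 2 ≤ C.card →
      ReachState P₁ P₂ X₁ X₂ s C u₁ (C ∩ X₁) u₂ (C ∩ X₂)

/-- The mutual PCSP support `M(P₁, P₂)`. -/
def mutualPCSP (P₁ P₂ : Set (PCSPair α)) (X₁ X₂ : Finset α) : Set (PCSPair α) :=
  {p | ∃ W t₁ W₁ t₂ W₂ s₁ s₂, ReachState P₁ P₂ X₁ X₂ p.1 W t₁ W₁ t₂ W₂ ∧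
    s₁ ∈ pcspSupportAt P₁ t₁ W₁ ∧ s₂ ∈ pcspSupportAt P₂ t₂ W₂ ∧
    p.2 ∈ boxTimes s₁ s₂ ∧ Subsplit.Valid p.2 ∧ Subsplit.Nontriv p.2}

/-- `PathTo M a c`: there is a chain of parent-child pairs of `M` from `a` down to `c`
(possibly empty, when `a = c`). -/
inductive PathTo (M : Set (PCSPair α)) : Subsplit α → Subsplit α → Prop
  | refl (a : Subsplit α) : PathTo M a a
  | cons {a b c : Subsplit α} : (a, b) ∈ M → PathTo M b c → PathTo M a c

/-- `(t, s)` is a PCSP of the topology `τ` on `X`: `s ∈ τ` and `t` is a member of `τ`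
having `U(s)` as a child clade, or the root placeholder `⟨X, ∅⟩` when `U(s) = X`. -/
def IsPCSPOf (X : Finset α) (τ : Finset (Subsplit α)) (t s : Subsplit α) : Prop :=
  s ∈ τ ∧ ((t ∈ τ ∧ Subsplit.clade s ∈ t) ∨
    (Subsplit.clade s = X ∧ t = Sym2.mk X (∅ : Finset α)))

/-- The set of PCSPs of a topology `τ` on `X`. -/
def pcspSet (X : Finset α) (τ : Finset (Subsplit α)) : Set (PCSPair α) :=
  {p | IsPCSPOf X τ p.1 p.2}

/-- `a` is an ancestor of `s` in `τ`: `a ∈ τ` (or the root placeholder) and `U(s)` is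
contained in a child clade of `a`. -/
def IsAncestor (X : Finset α) (τ : Finset (Subsplit α)) (a s : Subsplit α) : Prop :=
  (a ∈ τ ∨ a = Sym2.mk X (∅ : Finset α)) ∧ ∃ C ∈ a, Subsplit.clade s ⊆ C

/-- `d` is a strict descendant of `a`: `U(d)` is contained in a child clade of `a`. -/
def StrictDesc (a d : Subsplit α) : Prop := ∃ C ∈ a, Subsplit.clade d ⊆ C

/-- `d` is a (valid) descendant of `a`: `d = a`, or `U(d)` is contained in a child clade
of `a`. -/
def Descend (a d : Subsplit α) : Prop := d = a ∨ ∃ C ∈ a, Subsplit.clade d ⊆ C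

/-- The parent subsplit of `s` in `τ` (on taxon set `X`): the member of `τ` having `U(s)`
as a child clade if one exists, otherwise the root placeholder `⟨X, ∅⟩`. -/
noncomputable def parentIn (X : Finset α) (τ : Finset (Subsplit α)) (s : Subsplit α) :
    Subsplit α :=
  if h : ∃ t ∈ τ, Subsplit.clade s ∈ t then h.choose else Sym2.mk X (∅ : Finset α)

/-- The finite set of PCSPs of a topology `τ` on `X`. -/
noncomputable def pcspFinset (X : Finset α) (τ : Finset (Subsplit α)) : Finset (PCSPair α) :=
  τ.image (fun s => (parentIn X τ s, s))

/-- All (valid) subsplits on the taxon set `X`. -/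
noncomputable def allSubsplits (X : Finset α) : Finset (Subsplit α) :=
  ((X.powerset ×ˢ X.powerset).image (fun p => Sym2.mk p.1 p.2)).filter (fun s => Subsplit.Valid s)

/-- All nontrivial (valid) subsplits dividing the clade `W`. -/
noncomputable def subsplitsOn (W : Finset α) : Finset (Subsplit α) :=
  (W.powerset.image (fun Y => Sym2.mk Y (W \ Y))).filter (fun s => Subsplit.Nontriv s)

/-- All nontrivial subsplits whose parent clade is a child clade of `a`. -/
noncomputable def childSubsplits (a : Subsplit α) : Finset (Subsplit α) :=
  Sym2.lift ⟨fun Y Z => subsplitsOn Y ∪ subsplitsOn Z, fun _ _ => Finset.union_comm _ _⟩ a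

end Defs

section CCD

variable {α : Type*} [DecidableEq α]

/-- CCD softmax conditional probability `q(s | U(s))`. -/
noncomputable def ccdCond (v : Subsplit α → ℝ) (s : Subsplit α) : ℝ :=
  Real.exp (v s) / ∑ s' ∈ subsplitsOn (Subsplit.clade s), Real.exp (v s')

/-- CCD probability of a topology: `q(τ) = ∏_{s ∈ τ} q(s | U(s))`. -/
noncomputable def ccdTopProb (v : Subsplit α → ℝ) (τ : Finset (Subsplit α)) : ℝ :=
  ∏ s ∈ τ, ccdCond v s

/-- Unconditional subsplit probability `q(s)`: sum of `q(τ)` over topologies `τ ∈ T`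
containing `s`. -/
noncomputable def ccdSubProb (T : Finset (Finset (Subsplit α))) (v : Subsplit α → ℝ)
    (s : Subsplit α) : ℝ :=
  ∑ τ ∈ T.filter (fun τ => s ∈ τ), ccdTopProb v τ

/-- Unconditional clade probability `q(W)`: sum of `q(τ)` over topologies `τ ∈ T` in which
the clade `W` appears (i.e. `W = X` or `W` is a child clade of some subsplit of `τ`). -/
noncomputable def ccdCladeProb (X : Finset α) (T : Finset (Finset (Subsplit α)))
    (v : Subsplit α → ℝ) (W : Finset α) : ℝ :=
  ∑ τ ∈ T.filter (fun τ => W = X ∨ ∃ s ∈ τ, W ∈ s), ccdTopProb v τ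

/-- Fuel-based recursion computing the CCD conditional path probability. -/
noncomputable def ccdPathAux (v : Subsplit α → ℝ) : ℕ → Subsplit α → Subsplit α → ℝ
  | 0, a, d => if d = a then 1 else 0
  | n + 1, a, d => if d = a then 1 else
      ∑ s'' ∈ childSubsplits a, ccdCond v s'' * ccdPathAux v n s'' d

/-- CCD conditional path probability `q(a →* d | a)`: the sum over all descending chains of
subsplits from `a` to `d` of the product of the conditional probabilities along the chain. -/
noncomputable def ccdPath (v : Subsplit α → ℝ) (a d : Subsplit α) : ℝ :=
  ccdPathAux v ((Subsplit.clade a).card + 1) a d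

/-- CCD conditional path probability starting from a clade:
`q(W →* d | W) = Σ_{s'' : U(s'') = W} q(s'' | U(s'')) q(s'' →* d | s'')`. -/
noncomputable def ccdPathFromClade (v : Subsplit α → ℝ) (W : Finset α) (d : Subsplit α) : ℝ :=
  ∑ s'' ∈ subsplitsOn W, ccdCond v s'' * ccdPath v s'' d

end CCD

section SCD

variable {α : Type*} [DecidableEq α]

/-- SCD softmax conditional probability `q(s | t)`. -/
noncomputable def scdCond (v : PCSPair α → ℝ) (t s : Subsplit α) : ℝ :=
  Real.exp (v (t, s)) / ∑ s'' ∈ subsplitsOn (Subsplit.clade s), Real.exp (v (t, s''))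

/-- SCD probability of a topology `τ` on `X`: the product over PCSPs `(t → s)` of `τ` of
`q(s | t)`. -/
noncomputable def scdTopProb (v : PCSPair α → ℝ) (X : Finset α) (τ : Finset (Subsplit α)) : ℝ :=
  ∏ s ∈ τ, scdCond v (parentIn X τ s) s

/-- Unconditional subsplit probability `q(a)` for SCD-parameterized SBNs. -/
noncomputable def scdSubProb (T : Finset (Finset (Subsplit α))) (v : PCSPair α → ℝ)
    (X : Finset α) (a : Subsplit α) : ℝ :=
  ∑ τ ∈ T.filter (fun τ => a ∈ τ), scdTopProb v X τ

/-- Fuel-based recursion computing the SCD conditional path probability. -/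
noncomputable def scdPathAux (v : PCSPair α → ℝ) : ℕ → Subsplit α → Subsplit α → ℝ
  | 0, a, d => if d = a then 1 else 0
  | n + 1, a, d => if d = a then 1 else
      ∑ s'' ∈ childSubsplits a, scdCond v a s'' * scdPathAux v n s'' d

/-- SCD conditional path probability `q(a →* d | a)`. -/
noncomputable def scdPath (v : PCSPair α → ℝ) (a d : Subsplit α) : ℝ :=
  scdPathAux v ((Subsplit.clade a).card + 1) a d

/-- SCD conditional path probability from a subsplit `t` with designated child clade `W`:
`q(t/W →* d | t/W) = Σ_{s'' : U(s'') = W} q(s'' | t) q(s'' →* d | s'')`. -/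
noncomputable def scdPathFrom (v : PCSPair α → ℝ) (t : Subsplit α) (W : Finset α)
    (d : Subsplit α) : ℝ :=
  ∑ s'' ∈ subsplitsOn W, scdCond v t s'' * scdPath v s'' d

/-- Unconditional ancestor-descendant probability `q(a →* d)`: sum of `q(τ)` over topologies
`τ ∈ T` containing both `a` and `d` with `d` a descendant of `a`. -/
noncomputable def scdPairProb (T : Finset (Finset (Subsplit α))) (v : PCSPair α → ℝ)
    (X : Finset α) (a d : Subsplit α) : ℝ :=
  ∑ τ ∈ T.filter (fun τ => a ∈ τ ∧ d ∈ τ ∧ Descend a d), scdTopProb v X τ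

end SCD

section Statements

variable {α : Type*} [DecidableEq α]

/-!
Walk down `τ` from the root, carrying a reachable state whose components `tᵢ` are the parents,
in the restricted topologies `τ|Xᵢ`, of the current clade. At a subsplit `s` of `τ` the
restrictions `s|Xᵢ` are then PCSP children of `tᵢ` in `τ|Xᵢ`, hence lie in `Pᵢ(tᵢ/…)`, and `s`
is recovered as a member of `s|X₁ ⊠ s|X₂`. The restricted parent changes exactly when `s|Xᵢ`
is nontrivial, which is the update rule `uᵢ` of reachable states.
-/

namespace Subsplit

@[simp] lemma clade_mk (Y Z : Finset α) : clade (Sym2.mk Y Z) = Y ∪ Z := rfl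

@[simp] lemma restrict_mk (Y Z B : Finset α) :
    restrict (Sym2.mk Y Z) B = Sym2.mk (Y ∩ B) (Z ∩ B) := rfl

lemma clade_restrict (s : Subsplit α) (B : Finset α) : clade (restrict s B) = clade s ∩ B := by
  induction s using Sym2.ind with
  | _ Y Z => simp [Finset.union_inter_distrib_right]

lemma Valid.restrict {s : Subsplit α} (h : Valid s) (B : Finset α) : Valid (restrict s B) := by
  induction s using Sym2.ind with
  | _ Y Z => exact h.mono Finset.inter_subset_left Finset.inter_subset_left

lemma mem_restrict {s : Subsplit α} {C : Finset α} (h : C ∈ s) (B : Finset α) :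
    C ∩ B ∈ restrict s B :=
  Sym2.mem_map.2 ⟨C, h, rfl⟩

lemma subset_clade {s : Subsplit α} {C : Finset α} (h : C ∈ s) : C ⊆ clade s := by
  induction s using Sym2.ind with
  | _ Y Z =>
    rcases Sym2.mem_iff.1 h with rfl | rfl
    · exact Finset.subset_union_left
    · exact Finset.subset_union_right

lemma card_lt_card_clade {s : Subsplit α} (hv : Valid s) (hn : Nontriv s) {C : Finset α}
    (h : C ∈ s) : C.card < (clade s).card := by
  induction s using Sym2.ind with
  | _ Y Z =>
    obtain ⟨hY, hZ⟩ : Y.Nonempty ∧ Z.Nonempty := hn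
    have hYZ : Disjoint Y Z := hv
    rw [clade_mk, Finset.card_union_of_disjoint hYZ]
    have := hY.card_pos
    have := hZ.card_pos
    rcases Sym2.mem_iff.1 h with rfl | rfl <;> omega

lemma two_le_card_clade {s : Subsplit α} (hv : Valid s) (hn : Nontriv s) :
    2 ≤ (clade s).card := by
  induction s using Sym2.ind with
  | _ Y Z =>
    have hY : Y.Nonempty := hn.1
    have := card_lt_card_clade hv hn (Sym2.mem_mk_left Y Z)
    have := hY.card_pos
    omega

lemma restrict_eq_of_not_nontriv {s : Subsplit α} {B : Finset α}
    (h : ¬ Nontriv (restrict s B)) : restrict s B = Sym2.mk (clade s ∩ B) ∅ := by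
  induction s using Sym2.ind with
  | _ Y Z =>
    simp only [restrict_mk, Nontriv, Sym2.lift_mk, not_and_or, Finset.not_nonempty_iff_eq_empty] at h
    rcases h with h | h
    · simp [Finset.union_inter_distrib_right, h, Sym2.eq_swap]
    · simp [Finset.union_inter_distrib_right, h]

lemma inter_eq_or_eq_empty_of_not_nontriv {s : Subsplit α} {B C : Finset α}
    (h : ¬ Nontriv (restrict s B)) (hC : C ∈ s) : C ∩ B = clade s ∩ B ∨ C ∩ B = ∅ := by
  rw [← clade_restrict, restrict_eq_of_not_nontriv h, clade_mk, Finset.union_empty]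
  have := mem_restrict hC B
  rw [restrict_eq_of_not_nontriv h, Sym2.mem_iff] at this
  exact this

lemma mem_boxTimes_restrict {s : Subsplit α} {X₁ X₂ : Finset α} (h : clade s ⊆ X₁ ∪ X₂) :
    s ∈ boxTimes (restrict s X₁) (restrict s X₂) := by
  induction s using Sym2.ind with
  | _ Y Z =>
    refine ⟨Y ∩ X₁, Z ∩ X₁, Y ∩ X₂, Z ∩ X₂, rfl, rfl, Or.inl ?_⟩
    rw [← Finset.inter_union_distrib_left, ← Finset.inter_union_distrib_left,
      Finset.inter_eq_left.2 (Finset.subset_union_left.trans h),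
      Finset.inter_eq_left.2 (Finset.subset_union_right.trans h)]

end Subsplit

open Subsplit

lemma mem_restrictT {τ : Finset (Subsplit α)} {B : Finset α} {s : Subsplit α}
    (hs : s ∈ τ) (hn : Nontriv (restrict s B)) : restrict s B ∈ restrictT τ B :=
  Finset.mem_filter.2 ⟨Finset.mem_image_of_mem _ hs, hn⟩

namespace IsTopology

variable {W : Finset α} {τ : Finset (Subsplit α)}

lemma exists_isPCSPOf (hτ : IsTopology W τ) {s : Subsplit α} (hs : s ∈ τ) :
    ∃ t, IsPCSPOf W τ t s := by
  rcases hτ.parentEx s hs with hW | ⟨t, ht, hst⟩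
  · exact ⟨_, hs, Or.inr ⟨hW, rfl⟩⟩
  · exact ⟨t, hs, Or.inl ⟨ht, hst⟩⟩

theorem isPCSPOf_induction (hτ : IsTopology W τ) {motive : Subsplit α → Subsplit α → Prop}
    (root : ∀ s ∈ τ, clade s = W → motive (Sym2.mk W ∅) s)
    (step : ∀ t' t s, IsPCSPOf W τ t' t → motive t' t → s ∈ τ → t ∈ τ → clade s ∈ t →
      motive t s) :
    ∀ t s, IsPCSPOf W τ t s → motive t s := by
  intro t s hts
  -- the parent's clade is strictly larger, so `max |U(u)| - |U(s)|` decreases towards the root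
  induction hm : (τ.sup fun u => (clade u).card) - (clade s).card
    using Nat.strong_induction_on generalizing t s with
  | _ n ih =>
    obtain ⟨hs, ⟨ht, hst⟩ | ⟨hsW, rfl⟩⟩ := hts
    · obtain ⟨t', ht'⟩ := hτ.exists_isPCSPOf ht
      refine step t' t s ht' (ih _ ?_ t' t ht' rfl) hs ht hst
      have := card_lt_card_clade (hτ.valid t ht) (hτ.nontriv t ht) hst
      have := Finset.le_sup (f := fun u => (clade u).card) ht
      omega
    · exact root s hs hsW

lemma clade_subset (hτ : IsTopology W τ) {s : Subsplit α} (hs : s ∈ τ) : clade s ⊆ W := by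
  obtain ⟨t, hts⟩ := hτ.exists_isPCSPOf hs
  refine hτ.isPCSPOf_induction (motive := fun _ s => clade s ⊆ W)
    (fun _ _ h => h.le) (fun _ _ _ _ h _ _ hst => (subset_clade hst).trans h) t s hts

end IsTopology

/-- `t` is the parent of the clade `D` in the topology `τ'` on `X'`, unless `D` is too small
to be the parent clade of a nontrivial subsplit. -/
def IsParentOrSmall (X' : Finset α) (τ' : Finset (Subsplit α)) (t : Subsplit α)
    (D : Finset α) : Prop :=
  (t ∈ τ' ∧ D ∈ t) ∨ (D = X' ∧ t = Sym2.mk X' ∅) ∨ D.card ≤ 1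

lemma IsParentOrSmall.isPCSPOf {X' : Finset α} {τ' : Finset (Subsplit α)} {t s : Subsplit α}
    (h : IsParentOrSmall X' τ' t (clade s)) (hs : s ∈ τ') (hcard : 2 ≤ (clade s).card) :
    IsPCSPOf X' τ' t s := by
  rcases h with h | h | h
  · exact ⟨hs, Or.inl h⟩
  · exact ⟨hs, Or.inr h⟩
  · omega

section Restriction

variable {X' : Finset α} {τ : Finset (Subsplit α)}

lemma restrict_mem_pcspSupportAt {P : Set (PCSPair α)}
    (hcov : ∀ t s, IsPCSPOf X' (restrictT τ X') t s → (t, s) ∈ P)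
    {s t : Subsplit α} (hs : s ∈ τ) (hv : Valid s)
    (ht : IsParentOrSmall X' (restrictT τ X') t (clade s ∩ X')) :
    restrict s X' ∈ pcspSupportAt P t (clade s ∩ X') := by
  by_cases hn : Nontriv (restrict s X')
  · rw [← clade_restrict] at ht ⊢
    exact Or.inl ⟨rfl, hcov _ _ (ht.isPCSPOf (mem_restrictT hs hn)
      (two_le_card_clade (hv.restrict X') hn))⟩
  · exact Or.inr (restrict_eq_of_not_nontriv hn)

lemma IsParentOrSmall.exists_child {t tP : Subsplit α} (ht : t ∈ τ)
    (htP : IsParentOrSmall X' (restrictT τ X') tP (clade t ∩ X')) {C : Finset α} (hC : C ∈ t) :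
    ∃ u, ((Nontriv (restrict t X') ∧ u = restrict t X') ∨
        (¬ Nontriv (restrict t X') ∧ u = tP)) ∧
      IsParentOrSmall X' (restrictT τ X') u (C ∩ X') := by
  by_cases hn : Nontriv (restrict t X')
  · exact ⟨_, Or.inl ⟨hn, rfl⟩, Or.inl ⟨mem_restrictT ht hn, mem_restrict hC X'⟩⟩
  · refine ⟨tP, Or.inr ⟨hn, rfl⟩, ?_⟩
    rcases inter_eq_or_eq_empty_of_not_nontriv hn hC with h | h
    · rwa [h]
    · exact Or.inr (Or.inr (by simp [h]))

end Restriction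

theorem exists_reachState_of_isPCSPOf {X₁ X₂ : Finset α} {P₁ P₂ : Set (PCSPair α)}
    {τ : Finset (Subsplit α)} (hτ : IsTopology (X₁ ∪ X₂) τ)
    (hcov₁ : ∀ t s, IsPCSPOf X₁ (restrictT τ X₁) t s → (t, s) ∈ P₁)
    (hcov₂ : ∀ t s, IsPCSPOf X₂ (restrictT τ X₂) t s → (t, s) ∈ P₂) :
    ∀ t s, IsPCSPOf (X₁ ∪ X₂) τ t s →
      ∃ t₁ t₂, ReachState P₁ P₂ X₁ X₂ t (clade s) t₁ (clade s ∩ X₁) t₂ (clade s ∩ X₂) ∧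
        IsParentOrSmall X₁ (restrictT τ X₁) t₁ (clade s ∩ X₁) ∧
        IsParentOrSmall X₂ (restrictT τ X₂) t₂ (clade s ∩ X₂) := by
  refine hτ.isPCSPOf_induction ?_ ?_
  · intro s _ hs
    have e₁ : (X₁ ∪ X₂) ∩ X₁ = X₁ := Finset.inter_eq_right.2 Finset.subset_union_left
    have e₂ : (X₁ ∪ X₂) ∩ X₂ = X₂ := Finset.inter_eq_right.2 Finset.subset_union_right
    rw [hs, e₁, e₂]
    exact ⟨_, _, ReachState.root, Or.inr (Or.inl ⟨rfl, rfl⟩), Or.inr (Or.inl ⟨rfl, rfl⟩)⟩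
  · rintro _ t s _ ⟨t₁, t₂, hR, h₁, h₂⟩ hs ht hst
    obtain ⟨u₁, hu₁, h₁'⟩ := h₁.exists_child ht hst
    obtain ⟨u₂, hu₂, h₂'⟩ := h₂.exists_child ht hst
    have hvt := hτ.valid t ht
    exact ⟨u₁, u₂, ReachState.step hR (restrict_mem_pcspSupportAt hcov₁ ht hvt h₁)
      (restrict_mem_pcspSupportAt hcov₂ ht hvt h₂) (mem_boxTimes_restrict (hτ.clade_subset ht))
      hvt (hτ.nontriv t ht) hu₁ hu₂ hst (two_le_card_clade (hτ.valid s hs) (hτ.nontriv s hs)),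
      h₁', h₂'⟩

theorem stmt6_general (X₁ X₂ : Finset α) (P₁ P₂ : Set (PCSPair α))
    (τ : Finset (Subsplit α)) (hτ : IsTopology (X₁ ∪ X₂) τ)
    (hcov₁ : ∀ t s : Subsplit α, IsPCSPOf X₁ (restrictT τ X₁) t s → (t, s) ∈ P₁)
    (hcov₂ : ∀ t s : Subsplit α, IsPCSPOf X₂ (restrictT τ X₂) t s → (t, s) ∈ P₂) :
    ∀ t s : Subsplit α, IsPCSPOf (X₁ ∪ X₂) τ t s → (t, s) ∈ mutualPCSP P₁ P₂ X₁ X₂ := by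
  intro t s hts
  obtain ⟨t₁, t₂, hR, h₁, h₂⟩ := exists_reachState_of_isPCSPOf hτ hcov₁ hcov₂ t s hts
  have hs := hts.1
  have hv := hτ.valid s hs
  exact ⟨_, t₁, _, t₂, _, _, _, hR, restrict_mem_pcspSupportAt hcov₁ hs hv h₁,
    restrict_mem_pcspSupportAt hcov₂ hs hv h₂, mem_boxTimes_restrict (hτ.clade_subset hs),
    hv, hτ.nontriv s hs⟩

theorem stmt6 (X₁ X₂ : Finset α) (P₁ P₂ : Set (PCSPair α))
    (hP₁ : IsPCSPSupport X₁ P₁) (hP₂ : IsPCSPSupport X₂ P₂)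
    (τ : Finset (Subsplit α)) (hτ : IsTopology (X₁ ∪ X₂) τ)
    (hcov₁ : ∀ t s : Subsplit α, IsPCSPOf X₁ (restrictT τ X₁) t s → (t, s) ∈ P₁)
    (hcov₂ : ∀ t s : Subsplit α, IsPCSPOf X₂ (restrictT τ X₂) t s → (t, s) ∈ P₂) :
    ∀ t s : Subsplit α, IsPCSPOf (X₁ ∪ X₂) τ t s → (t, s) ∈ mutualPCSP P₁ P₂ X₁ X₂ :=
  stmt6_general X₁ X₂ P₁ P₂ τ hτ hcov₁ hcov₂

end Statements
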